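/- arXiv:math/9905016 — 6 statements merged into one kernel-verified Lean document; each statement's English description precedes it below -/
import Mathlib

section
/- Let φ : ℳ → P(ℕ)/fin be a Boolean-algebra embedding and let Φ be an exact lifting of φ. Then there is a sequence ⟨t_n : n ∈ ω⟩ in 2^{<ω} such that the set O = {(n, t_n) : n ∈ ω}, coding the open set ⋃_{n∈ω} {n} × [t_n], satisfies Φ(O) ≠* Φ[O]. Consequently, no exact lifting of an embedding of ℳ into P(ℕ)/fin is complete, where a lifting Φ is complete if Φ(O) =* Φ[O] for every f ∈ ω^ω and every O ⊆ B_f. -/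
open Set MeasureTheory
open scoped ENNReal

namespace Paper

/-- `X` and `Y` agree modulo a finite set. -/
def AlmostEq {α : Type} (X Y : Set α) : Prop := (symmDiff X Y).Finite

/-- the "equal mod finite" setoid on `Set α` -/
def finSetoid (α : Type) : Setoid (Set α) where
  r X Y := (symmDiff X Y).Finite
  iseqv := by
    constructor
    · intro X; simp
    · intro X Y h; rwa [symmDiff_comm]
    · intro X Y Z h1 h2
      exact (h1.union h2).subset (symmDiff_triangle X Y Z)

/-- the quotient Boolean algebra `P(α)/fin` -/
def PFin (α : Type) : Type := Quotient (finSetoid α)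

/-- the class of `X` in `P(α)/fin` -/
def PFin.mk {α : Type} (X : Set α) : PFin α := Quotient.mk (finSetoid α) X

/-- join in `P(α)/fin` -/
def PFin.sup {α : Type} : PFin α → PFin α → PFin α :=
  Quotient.lift₂ (fun X Y => PFin.mk (X ∪ Y))
    (by
      intro X Y X' Y' hX hY
      refine Quotient.sound ?_
      have hX' : (symmDiff X X').Finite := hX
      have hY' : (symmDiff Y Y').Finite := hY
      show (symmDiff (X ∪ Y) (X' ∪ Y')).Finite
      refine (hX'.union hY').subset ?_
      intro x hx
      simp only [Set.mem_symmDiff, Set.mem_union] at hx ⊢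
      tauto)

/-- meet in `P(α)/fin` -/
def PFin.inf {α : Type} : PFin α → PFin α → PFin α :=
  Quotient.lift₂ (fun X Y => PFin.mk (X ∩ Y))
    (by
      intro X Y X' Y' hX hY
      refine Quotient.sound ?_
      have hX' : (symmDiff X X').Finite := hX
      have hY' : (symmDiff Y Y').Finite := hY
      show (symmDiff (X ∩ Y) (X' ∩ Y')).Finite
      refine (hX'.union hY').subset ?_
      intro x hx
      simp only [Set.mem_symmDiff, Set.mem_inter_iff, Set.mem_union] at hx ⊢
      tauto)

/-- complement in `P(α)/fin` -/
def PFin.compl {α : Type} : PFin α → PFin α :=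
  Quotient.lift (fun X => PFin.mk Xᶜ)
    (by
      intro X Y h
      refine Quotient.sound ?_
      have h' : (symmDiff X Y).Finite := h
      show (symmDiff Xᶜ Yᶜ).Finite
      have e : symmDiff Xᶜ Yᶜ = symmDiff X Y := by
        ext x; simp only [Set.mem_symmDiff, Set.mem_compl_iff]; tauto
      rw [e]; exact h')

/-- bottom of `P(α)/fin` -/
def PFin.bot {α : Type} : PFin α := PFin.mk (∅ : Set α)

/-- top of `P(α)/fin` -/
def PFin.top {α : Type} : PFin α := PFin.mk (Set.univ : Set α)

/-- the Cantor set `2^ω` -/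
abbrev Cant : Type := ℕ → Bool

/-- the space `C = ω × 2^ω` -/
abbrev CSp : Type := ℕ × Cant

/-- the cylinder set `[s] = {x : s ⊂ x}` determined by a finite binary sequence -/
def cyl (s : List Bool) : Set Cant := {x | ∀ i : Fin s.length, x i.1 = s.get i}

/-- the basic clopen set `{n} × [s]` of `C` -/
def basic (n : ℕ) (s : List Bool) : Set CSp := {n} ×ˢ cyl s

lemma measurableSet_cyl (s : List Bool) : MeasurableSet (cyl s) := by
  have h : cyl s = ⋂ i : Fin s.length, (fun x : Cant => x i.1) ⁻¹' {s.get i} := by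
    ext x; simp [cyl]
  rw [h]
  exact MeasurableSet.iInter fun i => (measurable_pi_apply i.1) (measurableSet_singleton _)

lemma measurableSet_basic (n : ℕ) (s : List Bool) : MeasurableSet (basic n s) :=
  (measurableSet_singleton n).prod (measurableSet_cyl s)

/-- a measure on `C` is the right one when it gives each basic set `{n} × [s]`
measure `2^{-|s|}` (this determines the measure on all Borel sets). -/
def IsMeasureOK (μ : Measure CSp) : Prop :=
  ∀ (n : ℕ) (s : List Bool), μ (basic n s) = (2 : ℝ≥0∞)⁻¹ ^ s.length

/-- Borel subsets of `C` -/
abbrev BSet : Type := {A : Set CSp // MeasurableSet A}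

/-- the "equal modulo a null set" setoid on Borel sets of `C` -/
def measSetoid (μ : Measure CSp) : Setoid BSet where
  r A B := μ (symmDiff (A : Set CSp) (B : Set CSp)) = 0
  iseqv := by
    constructor
    · intro A; simp
    · intro A B h; rwa [symmDiff_comm]
    · intro A B C h1 h2
      exact measure_mono_null (symmDiff_triangle (A : Set CSp) (B : Set CSp) (C : Set CSp))
        (measure_union_null h1 h2)

/-- the measure algebra `ℳ = Bor(C)/𝒩` -/
def MAlg (μ : Measure CSp) : Type := Quotient (measSetoid μ)

/-- the class of a Borel set in the measure algebra -/
def MAlg.mk (μ : Measure CSp) (A : BSet) : MAlg μ := Quotient.mk (measSetoid μ) A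

variable {μ : Measure CSp}

/-- join in the measure algebra -/
def MAlg.sup : MAlg μ → MAlg μ → MAlg μ :=
  Quotient.lift₂ (fun A B : BSet => MAlg.mk μ ⟨(A : Set CSp) ∪ (B : Set CSp), A.2.union B.2⟩)
    (by
      intro A B A' B' hA hB
      refine Quotient.sound ?_
      have hA' : μ (symmDiff (A : Set CSp) (A' : Set CSp)) = 0 := hA
      have hB' : μ (symmDiff (B : Set CSp) (B' : Set CSp)) = 0 := hB
      show μ (symmDiff ((A : Set CSp) ∪ (B : Set CSp)) ((A' : Set CSp) ∪ (B' : Set CSp))) = 0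
      refine measure_mono_null ?_ (measure_union_null hA' hB')
      intro x hx
      simp only [Set.mem_symmDiff, Set.mem_union] at hx ⊢
      tauto)

/-- meet in the measure algebra -/
def MAlg.inf : MAlg μ → MAlg μ → MAlg μ :=
  Quotient.lift₂ (fun A B : BSet => MAlg.mk μ ⟨(A : Set CSp) ∩ (B : Set CSp), A.2.inter B.2⟩)
    (by
      intro A B A' B' hA hB
      refine Quotient.sound ?_
      have hA' : μ (symmDiff (A : Set CSp) (A' : Set CSp)) = 0 := hA
      have hB' : μ (symmDiff (B : Set CSp) (B' : Set CSp)) = 0 := hB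
      show μ (symmDiff ((A : Set CSp) ∩ (B : Set CSp)) ((A' : Set CSp) ∩ (B' : Set CSp))) = 0
      refine measure_mono_null ?_ (measure_union_null hA' hB')
      intro x hx
      simp only [Set.mem_symmDiff, Set.mem_inter_iff, Set.mem_union] at hx ⊢
      tauto)

/-- complement in the measure algebra -/
def MAlg.compl : MAlg μ → MAlg μ :=
  Quotient.lift (fun A : BSet => MAlg.mk μ ⟨(A : Set CSp)ᶜ, A.2.compl⟩)
    (by
      intro A B h
      refine Quotient.sound ?_
      have h' : μ (symmDiff (A : Set CSp) (B : Set CSp)) = 0 := h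
      show μ (symmDiff (A : Set CSp)ᶜ (B : Set CSp)ᶜ) = 0
      have e : symmDiff (A : Set CSp)ᶜ (B : Set CSp)ᶜ = symmDiff (A : Set CSp) (B : Set CSp) := by
        ext x; simp only [Set.mem_symmDiff, Set.mem_compl_iff]; tauto
      rw [e]; exact h')

/-- bottom of the measure algebra -/
def MAlg.bot : MAlg μ := MAlg.mk μ ⟨∅, MeasurableSet.empty⟩

/-- top of the measure algebra -/
def MAlg.top : MAlg μ := MAlg.mk μ ⟨Set.univ, MeasurableSet.univ⟩

/-- `φ : ℳ → P(ℕ)/fin` is a Boolean-algebra embedding -/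
structure IsEmbedding (μ : Measure CSp) (φ : MAlg μ → PFin ℕ) : Prop where
  injective : Function.Injective φ
  map_sup : ∀ a b, φ (MAlg.sup a b) = PFin.sup (φ a) (φ b)
  map_inf : ∀ a b, φ (MAlg.inf a b) = PFin.inf (φ a) (φ b)
  map_compl : ∀ a, φ (MAlg.compl a) = PFin.compl (φ a)
  map_bot : φ MAlg.bot = PFin.bot
  map_top : φ MAlg.top = PFin.top

/-- the open subset of `C` coded by a set `O` of pairs `(n,s)` -/
def openSet (O : Set (ℕ × List Bool)) : Set CSp := ⋃ p ∈ O, basic p.1 p.2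

lemma measurableSet_openSet (O : Set (ℕ × List Bool)) : MeasurableSet (openSet O) :=
  MeasurableSet.biUnion O.to_countable fun p _ => measurableSet_basic p.1 p.2

/-- the element of the measure algebra coded by `O` -/
def classOf (μ : Measure CSp) (O : Set (ℕ × List Bool)) : MAlg μ :=
  MAlg.mk μ ⟨openSet O, measurableSet_openSet O⟩

/-- `Φ` is a lifting of `φ : ℳ → P(ℕ)/fin`: it chooses a representative of `φ a` for every `a` -/
def IsLifting {μ : Measure CSp} (φ : MAlg μ → PFin ℕ) (Φ : MAlg μ → Set ℕ) : Prop :=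
  ∀ a, PFin.mk (Φ a) = φ a

/-- `Φ(O)`: the value of `Φ` at the class of the open set coded by `O` -/
def PhiSet {μ : Measure CSp} (Φ : MAlg μ → Set ℕ) (O : Set (ℕ × List Bool)) : Set ℕ :=
  Φ (classOf μ O)

/-- `Φ(n,s)` -/
def PhiPt {μ : Measure CSp} (Φ : MAlg μ → Set ℕ) (n : ℕ) (s : List Bool) : Set ℕ :=
  Φ (classOf μ {(n, s)})

/-- `Φ[O] = ⋃ {Φ(n,s) : (n,s) ∈ O}` -/
def PhiUnion {μ : Measure CSp} (Φ : MAlg μ → Set ℕ) (O : Set (ℕ × List Bool)) : Set ℕ :=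
  ⋃ p ∈ O, PhiPt Φ p.1 p.2

/-- the layer `B_f = {(n,s) : s ∈ 2^{f(n)}}` -/
def Bf (f : ℕ → ℕ) : Set (ℕ × List Bool) := {p | p.2.length = f p.1}

/-- the layer `B_{f,A} = {(n,s) : n ∈ A, s ∈ 2^{f(n)}}` -/
def BfA (f : ℕ → ℕ) (A : Set ℕ) : Set (ℕ × List Bool) := {p | p.1 ∈ A ∧ p.2.length = f p.1}

/-- `Φ` is an exact lifting: the sets `Φ(n,∅)` partition `ℕ` and each `Φ(n,s)` is the
disjoint union of `Φ(n,s⌢0)` and `Φ(n,s⌢1)`. -/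
def IsExact {μ : Measure CSp} (Φ : MAlg μ → Set ℕ) : Prop :=
  (∀ n m : ℕ, n ≠ m → Disjoint (PhiPt Φ n []) (PhiPt Φ m [])) ∧
  (⋃ n : ℕ, PhiPt Φ n []) = Set.univ ∧
  ∀ (n : ℕ) (s : List Bool),
    PhiPt Φ n s = PhiPt Φ n (s ++ [false]) ∪ PhiPt Φ n (s ++ [true]) ∧
    Disjoint (PhiPt Φ n (s ++ [false])) (PhiPt Φ n (s ++ [true]))

/-- `Φ` is a complete lifting: `Φ(O) =* Φ[O]` for every `f` and every `O ⊆ B_f`. -/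
def IsComplete {μ : Measure CSp} (Φ : MAlg μ → Set ℕ) : Prop :=
  ∀ f : ℕ → ℕ, ∀ O ⊆ Bf f, AlmostEq (PhiSet Φ O) (PhiUnion Φ O)

/-! Suppose every graph `O = {(n, t n)}` had `Φ(O) =* Φ[O]`. By exactness every `i ∈ Φ(n,∅)`
lies in some `Φ(n,s)` with `|s| = i + 2`; let `d` be the union of these cells `{n} × [s]`.
A graph through them lies below `d`, so its `Φ[O]` is almost contained in `Φ(d)`; choosing in
every column a cell whose `Φ` sticks out of `Φ(d)` would produce an infinite exceptional set,
so some whole column `Φ(n₀,∅)` lies inside `Φ(d)`. The cells of column `n₀` have total measure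
at most `1/2`, so `e = ({n₀} × 2^ω) \ d` is not null: `Φ(e)` is infinite, yet it is almost
contained in `Φ(n₀,∅) ⊆ Φ(d)` and almost disjoint from `Φ(d)`. -/

lemma AlmostEq.diff_finite {α : Type} {X Y : Set α} (h : AlmostEq X Y) : (Y \ X).Finite :=
  h.subset fun _ hx => Or.inr hx

lemma PFin.mk_eq_mk_iff {α : Type} {X Y : Set α} : PFin.mk X = PFin.mk Y ↔ AlmostEq X Y :=
  Quotient.eq

lemma PFin.mk_eq_bot_iff {α : Type} {X : Set α} : PFin.mk X = PFin.bot ↔ X.Finite := by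
  rw [PFin.bot, PFin.mk_eq_mk_iff, AlmostEq, Set.bot_eq_empty.symm, symmDiff_bot]

lemma MAlg.mk_eq_bot_iff {A : BSet} : MAlg.mk μ A = MAlg.bot ↔ μ A = 0 := by
  refine Quotient.eq.trans ?_
  change μ (symmDiff (A : Set CSp) ∅) = 0 ↔ _
  rw [← Set.bot_eq_empty, symmDiff_bot]

lemma openSet_mono {O O' : Set (ℕ × List Bool)} (h : O ⊆ O') : openSet O ⊆ openSet O' :=
  Set.biUnion_subset_biUnion_left h

lemma openSet_singleton (n : ℕ) (s : List Bool) : openSet {(n, s)} = basic n s :=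
  Set.biUnion_singleton _ _

lemma openSet_range {ι : Type} (f : ι → ℕ × List Bool) :
    openSet (Set.range f) = ⋃ i, basic (f i).1 (f i).2 :=
  Set.biUnion_range

lemma phiUnion_range {ι : Type} (Φ : MAlg μ → Set ℕ) (f : ι → ℕ × List Bool) :
    PhiUnion Φ (Set.range f) = ⋃ i, PhiPt Φ (f i).1 (f i).2 :=
  Set.biUnion_range

namespace IsLifting

variable {φ : MAlg μ → PFin ℕ} {Φ : MAlg μ → Set ℕ}

lemma finite_iff (hφ : IsEmbedding μ φ) (hΦ : IsLifting φ Φ) {a : MAlg μ} :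
    (Φ a).Finite ↔ a = MAlg.bot := by
  rw [← PFin.mk_eq_bot_iff, hΦ, ← hφ.map_bot, hφ.injective.eq_iff]

lemma almostEq_inf (hφ : IsEmbedding μ φ) (hΦ : IsLifting φ Φ) (a b : MAlg μ) :
    AlmostEq (Φ (MAlg.inf a b)) (Φ a ∩ Φ b) := by
  rw [← PFin.mk_eq_mk_iff, hΦ, hφ.map_inf, ← hΦ a, ← hΦ b]
  rfl

lemma almostEq_compl (hφ : IsEmbedding μ φ) (hΦ : IsLifting φ Φ) (a : MAlg μ) :
    AlmostEq (Φ (MAlg.compl a)) (Φ a)ᶜ := by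
  rw [← PFin.mk_eq_mk_iff, hΦ, hφ.map_compl, ← hΦ a]
  rfl

lemma infinite_of_measure_ne_zero (hφ : IsEmbedding μ φ) (hΦ : IsLifting φ Φ) {A : BSet}
    (hA : μ A ≠ 0) : (Φ (MAlg.mk μ A)).Infinite := by
  rwa [Set.Infinite, hΦ.finite_iff hφ, MAlg.mk_eq_bot_iff]

lemma inter_finite_of_disjoint (hφ : IsEmbedding μ φ) (hΦ : IsLifting φ Φ) {A B : BSet}
    (h : Disjoint (A : Set CSp) B) : (Φ (MAlg.mk μ A) ∩ Φ (MAlg.mk μ B)).Finite := by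
  have hbot : MAlg.inf (MAlg.mk μ A) (MAlg.mk μ B) = MAlg.bot := by
    refine MAlg.mk_eq_bot_iff.2 ?_
    change μ ((A : Set CSp) ∩ B) = 0
    rw [h.inter_eq, measure_empty]
  exact (hΦ.almostEq_inf hφ _ _).diff_finite.of_sdiff ((hΦ.finite_iff hφ).2 hbot)

lemma diff_finite_of_subset (hφ : IsEmbedding μ φ) (hΦ : IsLifting φ Φ) {A B : BSet}
    (h : (A : Set CSp) ⊆ B) : (Φ (MAlg.mk μ A) \ Φ (MAlg.mk μ B)).Finite := by
  have hcompl := (hΦ.almostEq_compl hφ (MAlg.mk μ B)).diff_finite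
  have hdisj := hΦ.inter_finite_of_disjoint hφ (A := A) (B := ⟨(B : Set CSp)ᶜ, B.2.compl⟩)
    (Set.disjoint_compl_right_iff_subset.2 h)
  refine (hdisj.union hcompl).subset fun i ⟨hiA, hiB⟩ => ?_
  by_cases hi : i ∈ Φ (MAlg.compl (MAlg.mk μ B))
  · exact Or.inl ⟨hiA, hi⟩
  · exact Or.inr ⟨hiB, hi⟩

lemma diff_finite_of_almostEq_of_subset (hφ : IsEmbedding μ φ) (hΦ : IsLifting φ Φ)
    {O O' : Set (ℕ × List Bool)} (hO : AlmostEq (PhiSet Φ O) (PhiUnion Φ O))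
    (hOO' : O ⊆ O') :
    (PhiUnion Φ O \ PhiSet Φ O').Finite := by
  have hsub := hΦ.diff_finite_of_subset hφ (A := ⟨openSet O, measurableSet_openSet O⟩)
    (B := ⟨openSet O', measurableSet_openSet O'⟩) (openSet_mono hOO')
  exact (hO.diff_finite.union hsub).subset (sdiff_triangle _ _ _)

end IsLifting

namespace IsExact

variable {Φ : MAlg μ → Set ℕ}

lemma phiPt_subset_nil (hΦ : IsExact Φ) (n : ℕ) (s : List Bool) :
    PhiPt Φ n s ⊆ PhiPt Φ n [] := by
  induction s using List.reverseRecOn with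
  | nil => exact subset_rfl
  | append_singleton s b ih =>
    refine subset_trans ?_ ih
    rw [(hΦ.2.2 n s).1]
    cases b
    · exact subset_union_left
    · exact subset_union_right

lemma disjoint_phiPt (hΦ : IsExact Φ) {n m : ℕ} (h : n ≠ m) (s t : List Bool) :
    Disjoint (PhiPt Φ n s) (PhiPt Φ m t) :=
  (hΦ.1 n m h).mono (hΦ.phiPt_subset_nil n s) (hΦ.phiPt_subset_nil m t)

lemma exists_length_eq_mem_phiPt (hΦ : IsExact Φ) {n i : ℕ} (hi : i ∈ PhiPt Φ n [])
    (k : ℕ) :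
    ∃ s : List Bool, s.length = k ∧ i ∈ PhiPt Φ n s := by
  induction k with
  | zero => exact ⟨[], rfl, hi⟩
  | succ k ih =>
    obtain ⟨s, hs, his⟩ := ih
    rw [(hΦ.2.2 n s).1] at his
    rcases his with h | h
    · exact ⟨s ++ [false], by simp [hs], h⟩
    · exact ⟨s ++ [true], by simp [hs], h⟩

lemma exists_cells_covering (hΦ : IsExact Φ) (depth : ℕ → ℕ) :
    ∃ s : ℕ → ℕ → List Bool, (∀ n i, (s n i).length = depth i) ∧
      ∀ n i, i ∈ PhiPt Φ n [] → i ∈ PhiPt Φ n (s n i) := by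
  have h : ∀ n i, ∃ s : List Bool,
      s.length = depth i ∧ (i ∈ PhiPt Φ n [] → i ∈ PhiPt Φ n s) := by
    intro n i
    by_cases hi : i ∈ PhiPt Φ n []
    · obtain ⟨s, hs, his⟩ := hΦ.exists_length_eq_mem_phiPt hi (depth i)
      exact ⟨s, hs, fun _ => his⟩
    · exact ⟨List.replicate (depth i) false, List.length_replicate, fun h => absurd h hi⟩
  choose s hlen hmem using h
  exact ⟨s, hlen, hmem⟩

end IsExact

lemma IsMeasureOK.measure_iUnion_basic_le (hμ : IsMeasureOK μ) (n : ℕ) {s : ℕ → List Bool}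
    (hs : ∀ j, (s j).length = j + 2) : μ (⋃ j, basic n (s j)) ≤ 2⁻¹ :=
  calc μ (⋃ j, basic n (s j))
      ≤ ∑' j, μ (basic n (s j)) := measure_iUnion_le _
    _ = ∑' j, (2⁻¹ : ℝ≥0∞) ^ 2 * 2⁻¹ ^ j :=
        tsum_congr fun j => by rw [hμ, hs, pow_add, mul_comm]
    _ = 2⁻¹ := by
      rw [ENNReal.tsum_mul_left, ENNReal.tsum_geometric_two, sq, mul_assoc,
        ENNReal.inv_mul_cancel two_ne_zero ENNReal.ofNat_ne_top, mul_one]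

lemma IsMeasureOK.measure_basic_nil_diff_ne_zero (hμ : IsMeasureOK μ) (n : ℕ)
    {s : ℕ → List Bool} (hs : ∀ j, (s j).length = j + 2) :
    μ (basic n [] \ ⋃ j, basic n (s j)) ≠ 0 := by
  refine (ne_of_lt ?_).symm
  calc (0 : ℝ≥0∞) < 1 - 2⁻¹ := by simp [ENNReal.one_sub_inv_two]
    _ ≤ μ (basic n []) - μ (⋃ j, basic n (s j)) := by
        rw [hμ n [], List.length_nil, pow_zero]
        exact tsub_le_tsub_left (hμ.measure_iUnion_basic_le n hs) 1
    _ ≤ μ (basic n [] \ ⋃ j, basic n (s j)) := le_measure_sdiff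

lemma exists_forall_subset_of_diff_finite {α : Type} {P : ℕ → ℕ → Set α} {X : Set α}
    (hdisj : ∀ n m, n ≠ m → ∀ j k, Disjoint (P n j) (P m k))
    (hfin : ∀ t : ℕ → ℕ, ((⋃ n, P n (t n)) \ X).Finite) : ∃ n, ∀ j, P n j ⊆ X := by
  by_contra! h
  simp only [Set.not_subset] at h
  choose t x hxP hxX using h
  have hinj : Function.Injective x := fun n m hnm => by
    by_contra hne
    exact Set.disjoint_left.mp (hdisj n m hne _ _) (hxP n) (hnm ▸ hxP m)
  refine Set.infinite_range_of_injective hinj ((hfin t).subset ?_)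
  exact Set.range_subset_iff.2 fun n => ⟨Set.mem_iUnion.2 ⟨n, hxP n⟩, hxX n⟩

theorem exists_not_almostEq_graph (hμ : IsMeasureOK μ) {φ : MAlg μ → PFin ℕ}
    (hφ : IsEmbedding μ φ) {Φ : MAlg μ → Set ℕ} (hΦ : IsLifting φ Φ) (hexact : IsExact Φ) :
    ∃ t : ℕ → List Bool, ¬ AlmostEq (PhiSet Φ (Set.range fun n => (n, t n)))
      (PhiUnion Φ (Set.range fun n => (n, t n))) := by
  by_contra! hcon
  obtain ⟨s, hlen, hcover⟩ := hexact.exists_cells_covering (· + 2)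
  set D := Set.range fun p : ℕ × ℕ => (p.1, s p.1 p.2)
  have hgraph (t : ℕ → ℕ) : ((⋃ n, PhiPt Φ n (s n (t n))) \ PhiSet Φ D).Finite := by
    rw [← phiUnion_range Φ fun n => (n, s n (t n))]
    exact hΦ.diff_finite_of_almostEq_of_subset hφ (hcon _)
      (Set.range_subset_iff.2 fun n => ⟨(n, t n), rfl⟩)
  obtain ⟨n₀, hn₀⟩ := exists_forall_subset_of_diff_finite
    (fun _ _ h _ _ => hexact.disjoint_phiPt h _ _) hgraph
  let E : BSet := ⟨basic n₀ [] \ ⋃ j, basic n₀ (s n₀ j),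
    (measurableSet_basic _ _).diff (MeasurableSet.iUnion fun _ => measurableSet_basic _ _)⟩
  have hE_col : (E : Set CSp) ⊆ openSet {(n₀, [])} :=
    openSet_singleton n₀ [] ▸ Set.sdiff_subset
  have hE_D : Disjoint (E : Set CSp) (openSet D) := by
    rw [openSet_range, Set.disjoint_iUnion_right]
    rintro ⟨m, j⟩
    refine Set.disjoint_left.2 fun x ⟨⟨hx₀, _⟩, hx⟩ ⟨hxm, hxs⟩ => hx ?_
    obtain rfl : m = n₀ := hxm.symm.trans hx₀
    exact Set.mem_iUnion.2 ⟨j, hx₀, hxs⟩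
  have hcol := hΦ.diff_finite_of_subset hφ (B := ⟨_, measurableSet_openSet _⟩) hE_col
  have hD := hΦ.inter_finite_of_disjoint hφ (B := ⟨_, measurableSet_openSet _⟩) hE_D
  refine hΦ.infinite_of_measure_ne_zero hφ (A := E)
    (hμ.measure_basic_nil_diff_ne_zero n₀ (hlen n₀)) ((hcol.union hD).subset fun i hi => ?_)
  by_cases hi₀ : i ∈ PhiPt Φ n₀ []
  · exact Or.inr ⟨hi, hn₀ i (hcover n₀ i hi₀)⟩
  · exact Or.inl ⟨hi, hi₀⟩

/-- for every exact lifting `Φ` of an embedding `φ : ℳ → P(ℕ)/fin` there is a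
sequence `⟨t_n : n ∈ ω⟩` in `2^{<ω}` such that for `O = {(n,t_n) : n ∈ ω}` we have
`Φ(O) ≠* Φ[O]`; consequently no exact lifting is complete. -/
theorem no_exact_lifting_is_complete
    (μ : Measure CSp) (hμ : IsMeasureOK μ)
    (φ : MAlg μ → PFin ℕ) (hφ : IsEmbedding μ φ)
    (Φ : MAlg μ → Set ℕ) (hΦ : IsLifting φ Φ) (hexact : IsExact Φ) :
    (∃ t : ℕ → List Bool,
        ¬ AlmostEq (PhiSet Φ (Set.range fun n => (n, t n)))
          (PhiUnion Φ (Set.range fun n => (n, t n)))) ∧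
    ¬ IsComplete Φ := by
  obtain ⟨t, hbad⟩ := exists_not_almostEq_graph hμ hφ hΦ hexact
  refine ⟨⟨t, hbad⟩, fun hcomplete => hbad ?_⟩
  exact hcomplete (fun n => (t n).length) _ (Set.range_subset_iff.2 fun _ => rfl)

end Paper
end

section
/- Let φ : ℳ → P(ℕ)/fin be a Boolean-algebra embedding, A ⊆ ℕ infinite, and f, g ∈ ω^ω with f ≤* g. For h ∈ ω^ω put B_{h,A} = {(n,s) : n ∈ A, s ∈ 2^{h(n)}} and C_h = {(n,s) : n ∈ A, |s| ≤ h(n)}. Suppose Φ_f and Φ_g are liftings of φ such that for each h ∈ {f, g}: Φ_h(O) = Φ_h[O] for all O ⊆ B_{h,A}; Φ_h(n,s) ∩ Φ_h(m,t) = ∅ whenever the basic sets {n} × [s] and {m} × [t] are disjoint; and Φ_h(n,s) = Φ_h(n,s⌢0) ∪ Φ_h(n,s⌢1) whenever n ∈ A and |s| < h(n). Then Φ_g(n,s) = Φ_f(n,s) for all but finitely many (n,s) ∈ C_f. -/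
open Set MeasureTheory
open scoped ENNReal

namespace Paper

variable {μ : Measure CSp}

/-!
Pairs `(n, s)` with `|s| ≤ f n` reduce to the layer `B_{f,A}`: by exactness, `Φ_h(n,s)` is the
union of the `Φ_h(n,t)` over the extensions `t` of `s` of length `f n ≤ g n`. On that layer, for
every `J ⊆ B_{f,A}` the union `Φ_f[J]` equals `Φ_f(J)`, while `Φ_g[J]` equals `Φ_g` at the
refinement of `J` to the layer `B_{g,A}`, which codes the same open set; since both are liftings
of `φ`, `Φ_f[J]` and `Φ_g[J]` agree modulo a finite set. If infinitely many `(n,s) ∈ B_{f,A}` had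
`Φ_f(n,s) ≠ Φ_g(n,s)`, pick a point of each difference. Both families are pairwise disjoint, so
each point lies in at most one member of the other family, and a Ramsey-type argument yields an
infinite `J` on which no chosen point falls into the other family's union: then `Φ_f[J]` and
`Φ_g[J]` differ on infinitely many points.
-/

def extensions (s : List Bool) (L : ℕ) : Set (List Bool) := {t | s <+: t ∧ t.length = L}

lemma extensions_length_self (s : List Bool) : extensions s s.length = {s} := by
  ext t
  simp only [extensions, Set.mem_ofPred_eq, Set.mem_singleton_iff]
  constructor
  · rintro ⟨hp, hlen⟩
    exact (hp.eq_of_length hlen.symm).symm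
  · rintro rfl
    exact ⟨List.prefix_refl _, rfl⟩

lemma extensions_eq_union {s : List Bool} {L : ℕ} (h : s.length < L) :
    extensions s L = extensions (s ++ [false]) L ∪ extensions (s ++ [true]) L := by
  ext t
  simp only [extensions, Set.mem_ofPred_eq, Set.mem_union]
  constructor
  · rintro ⟨⟨r, rfl⟩, hlen⟩
    cases r with
    | nil => simp at hlen; omega
    | cons b r =>
      cases b
      · exact Or.inl ⟨⟨r, by simp⟩, hlen⟩
      · exact Or.inr ⟨⟨r, by simp⟩, hlen⟩
  · rintro (⟨hp, hlen⟩ | ⟨hp, hlen⟩)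
    · exact ⟨(List.prefix_append s [false]).trans hp, hlen⟩
    · exact ⟨(List.prefix_append s [true]).trans hp, hlen⟩

lemma eq_biUnion_extensions {γ : Type*} (F : List Bool → Set γ) {N : ℕ}
    (hF : ∀ s : List Bool, s.length < N → F s = F (s ++ [false]) ∪ F (s ++ [true]))
    {s : List Bool} {L : ℕ} (hsL : s.length ≤ L) (hLN : L ≤ N) :
    F s = ⋃ t ∈ extensions s L, F t := by
  obtain ⟨d, rfl⟩ := Nat.exists_eq_add_of_le hsL
  induction d generalizing s with
  | zero => rw [Nat.add_zero, extensions_length_self, Set.biUnion_singleton]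
  | succ d ih =>
    have hsucc (b : Bool) : (s ++ [b]).length + d = s.length + (d + 1) := by
      simp only [List.length_append, List.length_singleton]; omega
    have hfalse := ih (s := s ++ [false]) (Nat.le_add_right _ _) ((hsucc false).trans_le hLN)
    have htrue := ih (s := s ++ [true]) (Nat.le_add_right _ _) ((hsucc true).trans_le hLN)
    rw [hsucc] at hfalse htrue
    rw [hF s (by omega), extensions_eq_union (by omega), Set.biUnion_union, ← hfalse, ← htrue]

lemma mem_cyl {s : List Bool} {x : Cant} : x ∈ cyl s ↔ ∀ i (hi : i < s.length), x i = s[i] :=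
  ⟨fun h i hi => h ⟨i, hi⟩, fun h i => h i.1 i.2⟩

lemma mem_cyl_append_singleton {s : List Bool} {b : Bool} {x : Cant} :
    x ∈ cyl (s ++ [b]) ↔ x ∈ cyl s ∧ x s.length = b := by
  simp only [mem_cyl, List.length_append, List.length_singleton, Nat.lt_succ_iff_lt_or_eq]
  constructor
  · intro h
    refine ⟨fun i hi => ?_, by simpa using h s.length (Or.inr rfl)⟩
    rw [h i (Or.inl hi), List.getElem_append_left hi]
  · rintro ⟨hs, hb⟩ i (hi | rfl)
    · rw [hs i hi, List.getElem_append_left hi]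
    · simpa using hb

lemma cyl_eq_union (s : List Bool) : cyl s = cyl (s ++ [false]) ∪ cyl (s ++ [true]) := by
  ext x
  simp only [Set.mem_union, mem_cyl_append_singleton]
  cases x s.length <;> simp

lemma eq_of_mem_cyl {s t : List Bool} {x : Cant} (hs : x ∈ cyl s) (ht : x ∈ cyl t)
    (hlen : s.length = t.length) : s = t :=
  List.ext_getElem hlen fun i h₁ h₂ => (mem_cyl.1 hs i h₁).symm.trans (mem_cyl.1 ht i h₂)

lemma basic_eq_biUnion_extensions (n : ℕ) {s : List Bool} {L : ℕ} (h : s.length ≤ L) :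
    basic n s = ⋃ t ∈ extensions s L, basic n t :=
  eq_biUnion_extensions (basic n)
    (fun s _ => by simp only [basic, ← Set.prod_union, ← cyl_eq_union]) h le_rfl

lemma pairwiseDisjoint_basic (h : ℕ → ℕ) : (Bf h).PairwiseDisjoint fun p => basic p.1 p.2 := by
  rintro ⟨n, s⟩ hs ⟨m, t⟩ ht hne
  refine Set.disjoint_left.2 ?_
  rintro ⟨a, x⟩ ⟨rfl, hxs⟩ ⟨rfl, hxt⟩
  exact hne (Prod.ext rfl (eq_of_mem_cyl hxs hxt (hs.trans ht.symm)))

lemma finite_setOf_fst_mem_length_le {F : Set ℕ} (hF : F.Finite) (h : ℕ → ℕ) :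
    {p : ℕ × List Bool | p.1 ∈ F ∧ p.2.length ≤ h p.1}.Finite :=
  (hF.biUnion fun n _ => (Set.finite_singleton n).prod (List.finite_length_le Bool (h n))).subset
    fun _ hp => Set.mem_biUnion hp.1 ⟨rfl, hp.2⟩

lemma exists_infinite_forall_ne_not_rel_of_finite {S : ℕ → ℕ → Prop}
    (hS : ∀ m, {n | S m n ∨ S n m}.Finite) :
    ∃ J : Set ℕ, J.Infinite ∧ ∀ m ∈ J, ∀ n ∈ J, m ≠ n → ¬ S m n := by
  choose b hb using fun m => (hS m).bddAbove
  -- Greedily, `a (j + 1)` lies beyond every neighbour of `a j`.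
  set a : ℕ → ℕ := fun j => (fun m => max (b m) m + 1)^[j] 0
  have ha_succ : ∀ j, a (j + 1) = max (b (a j)) (a j) + 1 := fun j =>
    Function.iterate_succ_apply' _ j 0
  have ha_mono : StrictMono a := strictMono_nat_of_lt_succ fun j => by rw [ha_succ]; omega
  have ha_far : ∀ i j, i < j → ¬ (S (a i) (a j) ∨ S (a j) (a i)) := fun i j hij hadj => by
    have hbound : a j ≤ b (a i) := hb (a i) hadj
    have hnext : a (i + 1) ≤ a j := ha_mono.monotone hij
    rw [ha_succ] at hnext
    omega
  refine ⟨Set.range a, Set.infinite_range_of_injective ha_mono.injective, ?_⟩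
  rintro - ⟨i, rfl⟩ - ⟨j, rfl⟩ hne hS'
  rcases lt_or_gt_of_ne (ne_of_apply_ne a hne) with hij | hij
  · exact ha_far i j hij (Or.inl hS')
  · exact ha_far j i hij (Or.inr hS')

lemma exists_infinite_forall_not_rel {R : ℕ → ℕ → Prop} (hR : ∀ m n n', R m n → R m n' → n = n')
    (hirr : ∀ m, ¬ R m m) : ∃ J : Set ℕ, J.Infinite ∧ ∀ m ∈ J, ∀ n ∈ J, ¬ R m n := by
  by_cases hfiber : ∃ v, {m | R m v}.Infinite
  · obtain ⟨v, hv⟩ := hfiber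
    exact ⟨{m | R m v} \ {v}, hv.sdiff (Set.finite_singleton v),
      fun m hm n hn hmn => hn.2 (hR m n v hmn hm.1)⟩
  · simp only [not_exists, Set.not_infinite] at hfiber
    have hS : ∀ m, {n | R m n ∨ R n m}.Finite := fun m =>
      (Set.Subsingleton.finite fun _ hn _ hn' => hR m _ _ hn hn').union (hfiber m)
    obtain ⟨J, hJ, hJR⟩ := exists_infinite_forall_ne_not_rel_of_finite hS
    refine ⟨J, hJ, fun m hm n hn hmn => ?_⟩
    rcases eq_or_ne m n with rfl | hne
    · exact hirr m hmn
    · exact hJR m hm n hn hne hmn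

lemma exists_not_almostEq_biUnion_of_not_subset {ι : Type*} {α : Type} {B : Set ι}
    (hB : B.Infinite) {X Y : ι → Set α} (hX : B.PairwiseDisjoint X) (hY : B.PairwiseDisjoint Y)
    (hXY : ∀ i ∈ B, ¬ X i ⊆ Y i) : ∃ J ⊆ B, ¬ AlmostEq (⋃ i ∈ J, X i) (⋃ i ∈ J, Y i) := by
  let e := hB.natEmbedding
  have he : ∀ {m n}, (e m : ι) = e n → m = n := fun h => e.injective (Subtype.ext h)
  choose k hkX hkY using fun n => Set.not_subset.1 (hXY (e n) (e n).2)
  have hk : Function.Injective k := fun m n h =>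
    he (hX.elim (e m).2 (e n).2 (Set.not_disjoint_iff.2 ⟨k m, hkX m, h ▸ hkX n⟩))
  obtain ⟨J, hJ, hJY⟩ := exists_infinite_forall_not_rel (R := fun m n => k m ∈ Y (e n))
    (fun _ n n' hn hn' => he (hY.elim (e n).2 (e n').2 (Set.not_disjoint_iff.2 ⟨_, hn, hn'⟩))) hkY
  refine ⟨(fun n => (e n : ι)) '' J, Set.image_subset_iff.2 fun n _ => (e n).2, fun hfin => ?_⟩
  refine (hJ.image hk.injOn) (hfin.subset ?_)
  rintro - ⟨n, hn, rfl⟩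
  refine Or.inl ⟨Set.mem_biUnion (Set.mem_image_of_mem _ hn) (hkX n), ?_⟩
  simp only [Set.mem_iUnion, Set.mem_image, exists_prop, not_exists, not_and]
  rintro - ⟨m, hm, rfl⟩
  exact hJY n hn m hm

lemma exists_not_almostEq_biUnion {ι : Type*} {α : Type} {B : Set ι} (hB : B.Infinite)
    {X Y : ι → Set α} (hX : B.PairwiseDisjoint X) (hY : B.PairwiseDisjoint Y)
    (hXY : ∀ i ∈ B, X i ≠ Y i) : ∃ J ⊆ B, ¬ AlmostEq (⋃ i ∈ J, X i) (⋃ i ∈ J, Y i) := by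
  have hcover : B ⊆ {i ∈ B | ¬ X i ⊆ Y i} ∪ {i ∈ B | ¬ Y i ⊆ X i} := fun i hi =>
    (not_and_or.1 fun h => hXY i hi (h.1.antisymm h.2)).imp (⟨hi, ·⟩) (⟨hi, ·⟩)
  rcases Set.infinite_union.1 (hB.mono hcover) with hP | hQ
  · obtain ⟨J, hJ, hJX⟩ := exists_not_almostEq_biUnion_of_not_subset hP
      (hX.subset (Set.sep_subset _ _)) (hY.subset (Set.sep_subset _ _)) fun i hi => hi.2
    exact ⟨J, hJ.trans (Set.sep_subset _ _), hJX⟩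
  · obtain ⟨J, hJ, hJY⟩ := exists_not_almostEq_biUnion_of_not_subset hQ
      (hY.subset (Set.sep_subset _ _)) (hX.subset (Set.sep_subset _ _)) fun i hi => hi.2
    exact ⟨J, hJ.trans (Set.sep_subset _ _), fun h => hJY (by rwa [AlmostEq, symmDiff_comm])⟩

def refineTo (O : Set (ℕ × List Bool)) (L : ℕ → ℕ) : Set (ℕ × List Bool) :=
  {q | ∃ s, (q.1, s) ∈ O ∧ q.2 ∈ extensions s (L q.1)}

lemma refineTo_subset_BfA {O : Set (ℕ × List Bool)} {A : Set ℕ} (hO : ∀ p ∈ O, p.1 ∈ A)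
    (L : ℕ → ℕ) : refineTo O L ⊆ BfA L A :=
  fun q ⟨s, hs, ht⟩ => ⟨hO (q.1, s) hs, ht.2⟩

lemma biUnion_refineTo {γ : Type*} (F : ℕ → List Bool → Set γ) {O : Set (ℕ × List Bool)}
    {L : ℕ → ℕ} (hF : ∀ p ∈ O, F p.1 p.2 = ⋃ t ∈ extensions p.2 (L p.1), F p.1 t) :
    ⋃ q ∈ refineTo O L, F q.1 q.2 = ⋃ p ∈ O, F p.1 p.2 := by
  ext x
  simp only [refineTo, Set.mem_iUnion, Set.mem_ofPred_eq, exists_prop, Prod.exists]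
  constructor
  · rintro ⟨n, t, ⟨s, hs, ht⟩, hx⟩
    exact ⟨n, s, hs, (hF _ hs).symm ▸ Set.mem_biUnion ht hx⟩
  · rintro ⟨n, s, hs, hx⟩
    rw [hF _ hs] at hx
    obtain ⟨t, ht, hx⟩ := Set.mem_iUnion₂.1 hx
    exact ⟨n, t, ⟨s, hs, ht⟩, hx⟩

lemma classOf_congr {O O' : Set (ℕ × List Bool)} (h : openSet O = openSet O') :
    classOf μ O = classOf μ O' := by
  unfold classOf
  congr 1
  exact Subtype.ext h

lemma IsLifting.almostEq {φ : MAlg μ → PFin ℕ} {Φ Ψ : MAlg μ → Set ℕ} (hΦ : IsLifting φ Φ)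
    (hΨ : IsLifting φ Ψ) (a : MAlg μ) : AlmostEq (Φ a) (Ψ a) :=
  Quotient.exact ((hΦ a).trans (hΨ a).symm)

def IsExactBelow (Φ : MAlg μ → Set ℕ) (h : ℕ → ℕ) (A : Set ℕ) : Prop :=
  ∀ n ∈ A, ∀ s : List Bool, s.length < h n →
    PhiPt Φ n s = PhiPt Φ n (s ++ [false]) ∪ PhiPt Φ n (s ++ [true])

def IsCompleteOn (Φ : MAlg μ → Set ℕ) (h : ℕ → ℕ) (A : Set ℕ) : Prop :=
  ∀ O ⊆ BfA h A, PhiSet Φ O = PhiUnion Φ O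

lemma pairwiseDisjoint_phiPt {Φ : MAlg μ → Set ℕ}
    (hdisj : ∀ (n : ℕ) (s : List Bool) (m : ℕ) (t : List Bool),
      basic n s ∩ basic m t = ∅ → PhiPt Φ n s ∩ PhiPt Φ m t = ∅) (h : ℕ → ℕ) :
    (Bf h).PairwiseDisjoint fun p => PhiPt Φ p.1 p.2 := fun _ hp _ hq hne =>
  Set.disjoint_iff_inter_eq_empty.2 <| hdisj _ _ _ _ <|
    Set.disjoint_iff_inter_eq_empty.1 (pairwiseDisjoint_basic h hp hq hne)

lemma almostEq_phiUnion_of_le {φ : MAlg μ → PFin ℕ} {A : Set ℕ} {f g : ℕ → ℕ}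
    {Φf Φg : MAlg μ → Set ℕ} (hliftf : IsLifting φ Φf) (hliftg : IsLifting φ Φg)
    (hcompf : IsCompleteOn Φf f A) (hcompg : IsCompleteOn Φg g A) (hexactg : IsExactBelow Φg g A)
    {O : Set (ℕ × List Bool)} (hO : O ⊆ BfA f A) (hle : ∀ p ∈ O, f p.1 ≤ g p.1) :
    AlmostEq (PhiUnion Φf O) (PhiUnion Φg O) := by
  have hlen : ∀ p ∈ O, p.2.length ≤ g p.1 := fun p hp => (hO hp).2 ▸ hle p hp
  have hclass : classOf μ (refineTo O g) = classOf μ O :=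
    classOf_congr (biUnion_refineTo basic fun p hp => basic_eq_biUnion_extensions p.1 (hlen p hp))
  have key : AlmostEq (PhiSet Φf O) (PhiSet Φg (refineTo O g)) := by
    rw [PhiSet, PhiSet, hclass]
    exact hliftf.almostEq hliftg _
  rwa [hcompf O hO, hcompg _ (refineTo_subset_BfA (fun p hp => (hO hp).1) g), PhiUnion, PhiUnion,
    biUnion_refineTo _ fun p hp =>
      eq_biUnion_extensions (PhiPt Φg p.1) (hexactg p.1 (hO hp).1) (hlen p hp) le_rfl] at key

theorem liftings_cohere_general
    (μ : Measure CSp)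
    (φ : MAlg μ → PFin ℕ)
    (A : Set ℕ)
    (f g : ℕ → ℕ) (hfg : {n : ℕ | ¬ f n ≤ g n}.Finite)
    (Φf Φg : MAlg μ → Set ℕ)
    (hliftf : IsLifting φ Φf) (hliftg : IsLifting φ Φg)
    (hcompf : ∀ O ⊆ BfA f A, PhiSet Φf O = PhiUnion Φf O)
    (hcompg : ∀ O ⊆ BfA g A, PhiSet Φg O = PhiUnion Φg O)
    (hdisjf : ∀ (n : ℕ) (s : List Bool) (m : ℕ) (t : List Bool),
      basic n s ∩ basic m t = ∅ → PhiPt Φf n s ∩ PhiPt Φf m t = ∅)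
    (hdisjg : ∀ (n : ℕ) (s : List Bool) (m : ℕ) (t : List Bool),
      basic n s ∩ basic m t = ∅ → PhiPt Φg n s ∩ PhiPt Φg m t = ∅)
    (hexactf : ∀ n ∈ A, ∀ s : List Bool, s.length < f n →
      PhiPt Φf n s = PhiPt Φf n (s ++ [false]) ∪ PhiPt Φf n (s ++ [true]))
    (hexactg : ∀ n ∈ A, ∀ s : List Bool, s.length < g n →
      PhiPt Φg n s = PhiPt Φg n (s ++ [false]) ∪ PhiPt Φg n (s ++ [true])) :
    {p : ℕ × List Bool | (p.1 ∈ A ∧ p.2.length ≤ f p.1) ∧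
      PhiPt Φg p.1 p.2 ≠ PhiPt Φf p.1 p.2}.Finite := by
  set D : Set (ℕ × List Bool) :=
    {p | p ∈ BfA f A ∧ f p.1 ≤ g p.1 ∧ PhiPt Φg p.1 p.2 ≠ PhiPt Φf p.1 p.2}
  have hD : D.Finite := by
    by_contra hD
    have hDf : D ⊆ Bf f := fun p hp => hp.1.2
    obtain ⟨J, hJD, hJ⟩ := exists_not_almostEq_biUnion hD
      ((pairwiseDisjoint_phiPt hdisjf f).subset hDf) ((pairwiseDisjoint_phiPt hdisjg f).subset hDf)
      fun p hp => hp.2.2.symm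
    exact hJ (almostEq_phiUnion_of_le hliftf hliftg hcompf hcompg hexactg
      (fun p hp => (hJD hp).1) fun p hp => (hJD hp).2.1)
  refine (finite_setOf_fst_mem_length_le (hfg.union (hD.image Prod.fst)) f).subset ?_
  rintro ⟨n, s⟩ ⟨⟨hn, hs⟩, hne⟩
  refine ⟨?_, hs⟩
  by_contra hgood
  have hle : f n ≤ g n := not_not.1 fun h => hgood (Or.inl h)
  refine hne ?_
  rw [eq_biUnion_extensions (PhiPt Φg n) (hexactg n hn) hs hle,
    eq_biUnion_extensions (PhiPt Φf n) (hexactf n hn) hs le_rfl]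
  refine Set.iUnion₂_congr fun t ht => not_not.1 fun hbad => hgood (Or.inr ?_)
  exact ⟨(n, t), ⟨⟨hn, ht.2⟩, hle, hbad⟩, rfl⟩

/-- the liftings `Φ_f` cohere: if `f ≤* g` and `Φ_f`, `Φ_g` are liftings
of `φ` that are exact and complete on the strata over `A` (and satisfy the disjointness
condition), then `Φ_g(n,s) = Φ_f(n,s)` for all but finitely many `(n,s) ∈ C_f`. -/
theorem liftings_cohere
    (μ : Measure CSp) (hμ : IsMeasureOK μ)
    (φ : MAlg μ → PFin ℕ) (hφ : IsEmbedding μ φ)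
    (A : Set ℕ) (hA : A.Infinite)
    (f g : ℕ → ℕ) (hfg : {n : ℕ | ¬ f n ≤ g n}.Finite)
    (Φf Φg : MAlg μ → Set ℕ)
    (hliftf : IsLifting φ Φf) (hliftg : IsLifting φ Φg)
    (hcompf : ∀ O ⊆ BfA f A, PhiSet Φf O = PhiUnion Φf O)
    (hcompg : ∀ O ⊆ BfA g A, PhiSet Φg O = PhiUnion Φg O)
    (hdisjf : ∀ (n : ℕ) (s : List Bool) (m : ℕ) (t : List Bool),
      basic n s ∩ basic m t = ∅ → PhiPt Φf n s ∩ PhiPt Φf m t = ∅)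
    (hdisjg : ∀ (n : ℕ) (s : List Bool) (m : ℕ) (t : List Bool),
      basic n s ∩ basic m t = ∅ → PhiPt Φg n s ∩ PhiPt Φg m t = ∅)
    (hexactf : ∀ n ∈ A, ∀ s : List Bool, s.length < f n →
      PhiPt Φf n s = PhiPt Φf n (s ++ [false]) ∪ PhiPt Φf n (s ++ [true]))
    (hexactg : ∀ n ∈ A, ∀ s : List Bool, s.length < g n →
      PhiPt Φg n s = PhiPt Φg n (s ++ [false]) ∪ PhiPt Φg n (s ++ [true])) :
    {p : ℕ × List Bool | (p.1 ∈ A ∧ p.2.length ≤ f p.1) ∧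
      PhiPt Φg p.1 p.2 ≠ PhiPt Φf p.1 p.2}.Finite :=
  liftings_cohere_general μ φ A f g hfg Φf Φg hliftf hliftg hcompf hcompg hdisjf hdisjg hexactf
    hexactg

end Paper
end

section
/- Let Φ : P(ℕ) → P(ℕ×ℕ) be a lifting of a Boolean-algebra embedding φ : P(ℕ) → P(ℕ×ℕ)/fin, let A ⊆ ℕ be infinite, and let f, g ∈ ω^ω with f ≤* g. If there are D ⊆ L_g and a finite-to-one function h : D → A such that Φ(a) ∩ L_g =* h⁻¹[a] for every a ⊆ A, then there are D₁ ⊆ L_f and a finite-to-one function h₁ : D₁ → A such that Φ(a) ∩ L_f =* h₁⁻¹[a] for every a ⊆ A. -/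
open Set MeasureTheory
open scoped ENNReal

namespace Paper

/-- `φ : P(ℕ) → P(α)/fin` is a Boolean-algebra embedding -/
structure IsEmbeddingPN {α : Type} (φ : Set ℕ → PFin α) : Prop where
  injective : Function.Injective φ
  map_sup : ∀ a b : Set ℕ, φ (a ∪ b) = PFin.sup (φ a) (φ b)
  map_inf : ∀ a b : Set ℕ, φ (a ∩ b) = PFin.inf (φ a) (φ b)
  map_compl : ∀ a : Set ℕ, φ aᶜ = PFin.compl (φ a)
  map_bot : φ ∅ = PFin.bot
  map_top : φ Set.univ = PFin.top

/-- `Φ` is a lifting of `φ : P(ℕ) → P(α)/fin` -/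
def IsLiftingPN {α : Type} (φ : Set ℕ → PFin α) (Φ : Set ℕ → Set α) : Prop :=
  ∀ a, PFin.mk (Φ a) = φ a

/-- the vertical column `V_n = {n} × ℕ` of `ℕ × ℕ` -/
def Vcol (n : ℕ) : Set (ℕ × ℕ) := {p | p.1 = n}

/-- `L_f = {(n,m) : m ≤ f(n)}` -/
def Lset (f : ℕ → ℕ) : Set (ℕ × ℕ) := {p | p.2 ≤ f p.1}

/-!
Take `D₁ = D ∩ L_f` and `h₁ = h`. Intersecting both sides of `Φ(a) ∩ L_g =* h⁻¹[a]` with `L_f`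
changes them only on `L_f \ L_g`, which is finite: it lies in the finitely many columns where
`f` exceeds `g`, each cut off at height `f(n)`.
-/

theorem Lset_diff_Lset_finite {f g : ℕ → ℕ} (hfg : {n : ℕ | ¬ f n ≤ g n}.Finite) :
    (Lset f \ Lset g).Finite := by
  refine (hfg.biUnion fun n _ => (finite_Iic (f n)).image (Prod.mk n)).subset ?_
  rintro ⟨n, m⟩ ⟨hf, hg⟩
  exact mem_biUnion (fun hle => hg (hf.trans hle)) ⟨m, hf, rfl⟩

theorem AlmostEq.inter_of_diff_finite {α : Type} {X Y L L' : Set α} (h : AlmostEq (X ∩ L) Y)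
    (hL : (L' \ L).Finite) : AlmostEq (X ∩ L') (Y ∩ L') := by
  refine (hL.union h).subset fun p hp => ?_
  simp only [mem_symmDiff, mem_inter_iff, mem_union, mem_sdiff] at hp ⊢
  tauto

theorem simple_below_Lg_gives_simple_below_Lf_general
    (Φ : Set ℕ → Set (ℕ × ℕ))
    (A : Set ℕ)
    (f g : ℕ → ℕ) (hfg : {n : ℕ | ¬ f n ≤ g n}.Finite)
    (D : Set (ℕ × ℕ))
    (h : ℕ × ℕ → ℕ) (hmaps : ∀ p ∈ D, h p ∈ A)
    (hfto : ∀ n : ℕ, {p ∈ D | h p = n}.Finite)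
    (hrep : ∀ a ⊆ A, AlmostEq (Φ a ∩ Lset g) {p ∈ D | h p ∈ a}) :
    ∃ (D₁ : Set (ℕ × ℕ)) (h₁ : ℕ × ℕ → ℕ), D₁ ⊆ Lset f ∧
      (∀ p ∈ D₁, h₁ p ∈ A) ∧ (∀ n : ℕ, {p ∈ D₁ | h₁ p = n}.Finite) ∧
      ∀ a ⊆ A, AlmostEq (Φ a ∩ Lset f) {p ∈ D₁ | h₁ p ∈ a} := by
  refine ⟨D ∩ Lset f, h, inter_subset_right, fun p hp => hmaps p hp.1,
    fun n => (hfto n).subset fun p hp => ⟨hp.1.1, hp.2⟩, fun a ha => ?_⟩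
  have hsep : {p ∈ D ∩ Lset f | h p ∈ a} = {p ∈ D | h p ∈ a} ∩ Lset f :=
    ext fun _ => and_right_comm
  rw [hsep]
  exact (hrep a ha).inter_of_diff_finite (Lset_diff_Lset_finite hfg)

/-- being simple on `A` below `L_g` implies being simple on `A` below `L_f`
when `f ≤* g`. -/
theorem simple_below_Lg_gives_simple_below_Lf
    (φ : Set ℕ → PFin (ℕ × ℕ)) (hφ : IsEmbeddingPN φ)
    (Φ : Set ℕ → Set (ℕ × ℕ)) (hΦ : IsLiftingPN φ Φ)
    (A : Set ℕ) (hA : A.Infinite)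
    (f g : ℕ → ℕ) (hfg : {n : ℕ | ¬ f n ≤ g n}.Finite)
    (D : Set (ℕ × ℕ)) (hD : D ⊆ Lset g)
    (h : ℕ × ℕ → ℕ) (hmaps : ∀ p ∈ D, h p ∈ A)
    (hfto : ∀ n : ℕ, {p ∈ D | h p = n}.Finite)
    (hrep : ∀ a ⊆ A, AlmostEq (Φ a ∩ Lset g) {p ∈ D | h p ∈ a}) :
    ∃ (D₁ : Set (ℕ × ℕ)) (h₁ : ℕ × ℕ → ℕ), D₁ ⊆ Lset f ∧
      (∀ p ∈ D₁, h₁ p ∈ A) ∧ (∀ n : ℕ, {p ∈ D₁ | h₁ p = n}.Finite) ∧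
      ∀ a ⊆ A, AlmostEq (Φ a ∩ Lset f) {p ∈ D₁ | h₁ p ∈ a} :=
  simple_below_Lg_gives_simple_below_Lf_general Φ A f g hfg D h hmaps hfto hrep

end Paper
end

section
/- Let Φ : P(ℕ) → P(ℕ×ℕ) be a lifting of a Boolean-algebra embedding φ : P(ℕ) → P(ℕ×ℕ)/fin, let A ⊆ ℕ be infinite, and let f, g ∈ ω^ω with f(n) ≤ g(n) for all n. Suppose D_f ⊆ L_f and D_g ⊆ L_g and finite-to-one functions h_f : D_f → A and h_g : D_g → A satisfy Φ(a) ∩ L_f =* h_f⁻¹[a] and Φ(a) ∩ L_g =* h_g⁻¹[a] for every a ⊆ A. Then D_f =* D_g ∩ L_f, and h_g(p) = h_f(p) for all but finitely many p ∈ D_f ∩ D_g. -/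
open Set MeasureTheory
open scoped ENNReal

namespace Paper

/-
If `h_f` and `h_g` disagreed on infinitely many points of `D_f ∩ D_g`, one could thin these out
greedily (both maps are finite-to-one) to an infinite set `T` with `h_f[T] ∩ h_g[T] = ∅`. For
`a = h_f[T]` the points of `T` lie in `h_f⁻¹[a]` but not in `h_g⁻¹[a]`, which contradicts the two
representations of `Φ(a)` since
`Φ(a) ∩ L_f ⊆ Φ(a) ∩ L_g`. The first claim is the case `a = A`.
-/

variable {α β : Type}

lemma AlmostEq.symm {X Y : Set α} (h : AlmostEq X Y) : AlmostEq Y X := by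
  rwa [AlmostEq, symmDiff_comm]

lemma AlmostEq.trans {X Y Z : Set α} (h₁ : AlmostEq X Y) (h₂ : AlmostEq Y Z) : AlmostEq X Z :=
  (h₁.union h₂).subset (symmDiff_triangle X Y Z)

lemma AlmostEq.inter_right {X Y : Set α} (h : AlmostEq X Y) (Z : Set α) :
    AlmostEq (X ∩ Z) (Y ∩ Z) := by
  rw [AlmostEq, ← inter_symmDiff_distrib_right]
  exact h.subset inter_subset_left

lemma AlmostEq.finite_diff_of_subset {X Y P Q : Set α} (hP : AlmostEq X P) (hQ : AlmostEq Y Q)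
    (hXY : X ⊆ Y) : (P \ Q).Finite := by
  refine (hP.union hQ).subset fun p ⟨hpP, hpQ⟩ => ?_
  by_cases hpX : p ∈ X
  · exact Or.inr (Or.inl ⟨hXY hpX, hpQ⟩)
  · exact Or.inl (Or.inr ⟨hpP, hpX⟩)

lemma finite_sep_mem_of_finite_fibers {S : Set α} {u : α → β}
    (hu : ∀ b, {p ∈ S | u p = b}.Finite) {V : Set β} (hV : V.Finite) :
    {p ∈ S | u p ∈ V}.Finite :=
  (hV.biUnion fun b _ => hu b).subset fun _ hp => mem_biUnion hp.2 ⟨hp.1, rfl⟩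

lemma exists_infinite_subset_disjoint_image {S : Set α} (hS : S.Infinite)
    {u v : α → β} (hu : ∀ b, {p ∈ S | u p = b}.Finite) (hv : ∀ b, {p ∈ S | v p = b}.Finite)
    (huv : ∀ p ∈ S, u p ≠ v p) :
    ∃ T ⊆ S, T.Infinite ∧ Disjoint (u '' T) (v '' T) := by
  classical
  have fresh : ∀ s : Finset α, (∀ x ∈ s, x ∈ S) →
      ∃ y, y ∈ S ∧ ∀ x ∈ s, u x ≠ v y ∧ u y ≠ v x ∧ x ≠ y := by
    intro s _
    have hbad : ((s : Set α) ∪ {p ∈ S | v p ∈ u '' s} ∪ {p ∈ S | u p ∈ v '' s}).Finite :=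
      (s.finite_toSet.union (finite_sep_mem_of_finite_fibers hv (s.finite_toSet.image u))).union
        (finite_sep_mem_of_finite_fibers hu (s.finite_toSet.image v))
    obtain ⟨y, hyS, hy⟩ := (hS.sdiff hbad).nonempty
    refine ⟨y, hyS, fun x hx => ⟨fun h => hy ?_, fun h => hy ?_, fun h => hy ?_⟩⟩
    · exact Or.inl (Or.inr ⟨hyS, x, hx, h⟩)
    · exact Or.inr ⟨hyS, x, hx, h.symm⟩
    · exact Or.inl (Or.inl (h ▸ hx))
  obtain ⟨seq, hseqS, hseq⟩ := exists_seq_of_forall_finset_exists _ _ fresh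
  have hinj : seq.Injective := by
    intro m n hmn
    by_contra hne
    rcases lt_or_gt_of_ne hne with h | h
    · exact (hseq m n h).2.2 hmn
    · exact (hseq n m h).2.2 hmn.symm
  refine ⟨range seq, range_subset_iff.2 hseqS, infinite_range_of_injective hinj, ?_⟩
  rw [disjoint_iff_forall_ne]
  rintro _ ⟨_, ⟨m, rfl⟩, rfl⟩ _ ⟨_, ⟨n, rfl⟩, rfl⟩
  rcases lt_trichotomy m n with h | rfl | h
  · exact (hseq m n h).1
  · exact huv _ (hseqS m)
  · exact (hseq n m h).2.1

theorem simple_witnesses_cohere_general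
    (Φ : Set ℕ → Set (ℕ × ℕ))
    (A : Set ℕ)
    (f g : ℕ → ℕ) (hfg : ∀ n, f n ≤ g n)
    (Df Dg : Set (ℕ × ℕ))
    (hf hg : ℕ × ℕ → ℕ)
    (hmf : ∀ p ∈ Df, hf p ∈ A) (hmg : ∀ p ∈ Dg, hg p ∈ A)
    (hftof : ∀ n : ℕ, {p ∈ Df | hf p = n}.Finite)
    (hftog : ∀ n : ℕ, {p ∈ Dg | hg p = n}.Finite)
    (hrepf : ∀ a ⊆ A, AlmostEq (Φ a ∩ Lset f) {p ∈ Df | hf p ∈ a})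
    (hrepg : ∀ a ⊆ A, AlmostEq (Φ a ∩ Lset g) {p ∈ Dg | hg p ∈ a}) :
    AlmostEq Df (Dg ∩ Lset f) ∧ {p ∈ Df ∩ Dg | hg p ≠ hf p}.Finite := by
  have hL : Lset f ⊆ Lset g := fun p hp => hp.trans (hfg p.1)
  constructor
  · have hAf := hrepf A subset_rfl
    have hAg := (hrepg A subset_rfl).inter_right (Lset f)
    rw [sep_eq_self_iff_mem_true.2 hmf] at hAf
    rw [sep_eq_self_iff_mem_true.2 hmg, inter_assoc, inter_eq_self_of_subset_right hL] at hAg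
    exact hAf.symm.trans hAg
  · by_contra hS
    obtain ⟨T, hTS, hT, hdisj⟩ := exists_infinite_subset_disjoint_image hS
      (fun n => (hftof n).subset fun p hp => ⟨hp.1.1.1, hp.2⟩)
      (fun n => (hftog n).subset fun p hp => ⟨hp.1.1.2, hp.2⟩) fun p hp => hp.2.symm
    have haA : hf '' T ⊆ A := image_subset_iff.2 fun p hp => hmf p (hTS hp).1.1
    have hTdiff : T ⊆ {p ∈ Df | hf p ∈ hf '' T} \ {p ∈ Dg | hg p ∈ hf '' T} := fun p hp =>
      ⟨⟨(hTS hp).1.1, p, hp, rfl⟩, fun hq => hdisj.ne_of_mem hq.2 (mem_image_of_mem hg hp) rfl⟩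
    exact hT (((hrepf _ haA).finite_diff_of_subset (hrepg _ haA)
      (inter_subset_inter_right _ hL)).subset hTdiff)

/-- the witnessing pairs `(D_f, h_f)` and `(D_g, h_g)` cohere when `f ≤ g`. -/
theorem simple_witnesses_cohere
    (φ : Set ℕ → PFin (ℕ × ℕ)) (hφ : IsEmbeddingPN φ)
    (Φ : Set ℕ → Set (ℕ × ℕ)) (hΦ : IsLiftingPN φ Φ)
    (A : Set ℕ) (hA : A.Infinite)
    (f g : ℕ → ℕ) (hfg : ∀ n, f n ≤ g n)
    (Df Dg : Set (ℕ × ℕ)) (hDf : Df ⊆ Lset f) (hDg : Dg ⊆ Lset g)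
    (hf hg : ℕ × ℕ → ℕ)
    (hmf : ∀ p ∈ Df, hf p ∈ A) (hmg : ∀ p ∈ Dg, hg p ∈ A)
    (hftof : ∀ n : ℕ, {p ∈ Df | hf p = n}.Finite)
    (hftog : ∀ n : ℕ, {p ∈ Dg | hg p = n}.Finite)
    (hrepf : ∀ a ⊆ A, AlmostEq (Φ a ∩ Lset f) {p ∈ Df | hf p ∈ a})
    (hrepg : ∀ a ⊆ A, AlmostEq (Φ a ∩ Lset g) {p ∈ Dg | hg p ∈ a}) :
    AlmostEq Df (Dg ∩ Lset f) ∧ {p ∈ Df ∩ Dg | hg p ≠ hf p}.Finite :=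
  simple_witnesses_cohere_general Φ A f g hfg Df Dg hf hg hmf hmg hftof hftog hrepf hrepg

end Paper
end

section
/- Let Φ : P(ℕ) → P(ℕ×ℕ) be a lifting of a Boolean-algebra embedding φ : P(ℕ) → P(ℕ×ℕ)/fin with Φ({n}) = V_n for every n, let A ⊆ ℕ be infinite, and let D ⊆ ℕ×ℕ and H : D → A be such that for every f ∈ ω^ω there are a set D_f ⊆ L_f and a finite-to-one function h_f : D_f → A with: Φ(a) ∩ L_f =* h_f⁻¹[a] for every a ⊆ A; D ∩ L_f =* D_f; and H(p) = h_f(p) for all but finitely many p ∈ D ∩ D_f. Then the set of m ∈ A for which {n ∈ A : H⁻¹(n) ∩ V_m ≠ ∅} is infinite is finite (here H⁻¹(n) denotes H⁻¹({n}) ⊆ D). -/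
/-!
If infinitely many columns were bad, a diagonal construction yields an infinite set `a` of bad
columns such that, for each `m ∈ a`, `H` sends infinitely many points of `D ∩ V_m` outside `a`.
As `V_m ⊆* Φ(a)` for `m ∈ a`, each column `m ∈ a` contains such a point lying in `D ∩ Φ(a)`, and a
single `f` puts all of them in `L_f`. But on `D ∩ Φ(a) ∩ L_f` the hypotheses give `H = h_f` and
`h_f ∈ a` up to finitely many exceptions.
-/

open Set MeasureTheory
open scoped ENNReal

namespace Paper

theorem exists_infinite_subset_forall_infinite_diff {S : Set ℕ} (hS : S.Infinite)
    {N : ℕ → Set ℕ} (hN : ∀ m ∈ S, (N m).Infinite) :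
    ∃ a ⊆ S, a.Infinite ∧ ∀ m ∈ a, (N m \ a).Infinite := by
  -- `μ` increases in `S` and each gap `(μ k, μ (k + 1))` meets `N m` for every `m ≤ μ k` in `S`;
  -- the gap points of `N (μ j)` for `k ≥ j` then lie outside `range μ`.
  obtain ⟨μ, hμS, hμ⟩ := exists_seq_of_forall_finset_exists (· ∈ S)
    (fun x y => x < y ∧ ∀ m ∈ S, m ≤ x → (N m ∩ Ioo x y).Nonempty) <| by
      intro s _
      set M := s.sup id
      choose! g hg using fun m (hm : m ∈ S) => (hN m hm).exists_gt M
      obtain ⟨y, hyS, hy⟩ := hS.exists_gt (max M ((Finset.range (M + 1)).sup g))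
      refine ⟨y, hyS, fun x hx => ⟨?_, fun m hm hmx => ⟨g m, (hg m hm).1, ?_, ?_⟩⟩⟩
      · have : x ≤ M := Finset.le_sup (f := id) hx
        omega
      · exact (Finset.le_sup (f := id) hx).trans_lt (hg m hm).2
      · have : m ≤ M := hmx.trans (Finset.le_sup (f := id) hx)
        have : g m ≤ (Finset.range (M + 1)).sup g :=
          Finset.le_sup (Finset.mem_range.2 (Nat.lt_succ_of_le this))
        omega
  have hμmono : StrictMono μ := fun m n h => (hμ m n h).1
  refine ⟨range μ, range_subset_iff.2 hμS, infinite_range_of_injective hμmono.injective, ?_⟩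
  rintro _ ⟨j, rfl⟩
  refine infinite_of_forall_exists_gt fun b => ?_
  obtain ⟨n, hnN, hn⟩ := (hμ (max j b) (max j b + 1) (Nat.lt_succ_self _)).2 (μ j) (hμS j)
    (hμmono.monotone (le_max_left j b))
  refine ⟨n, ⟨hnN, ?_⟩, ?_⟩
  · rintro ⟨i, rfl⟩
    have := hμmono.lt_iff_lt.1 hn.1
    have := hμmono.lt_iff_lt.1 hn.2
    omega
  · have : max j b ≤ μ (max j b) := hμmono.id_le _
    have := hn.1
    omega

theorem IsLiftingPN.diff_finite_of_subset {α : Type} {φ : Set ℕ → PFin α} {Φ : Set ℕ → Set α}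
    (hΦ : IsLiftingPN φ Φ) (hφ : IsEmbeddingPN φ) {a b : Set ℕ} (hba : b ⊆ a) :
    (Φ b \ Φ a).Finite := by
  have h : φ a = PFin.sup (φ b) (φ a) := by
    rw [← hφ.map_sup, union_eq_self_of_subset_left hba]
  rw [← hΦ a, ← hΦ b] at h
  have hsymm : (symmDiff (Φ b ∪ Φ a) (Φ a)).Finite := Quotient.exact h.symm
  exact hsymm.subset fun p hp => Or.inl ⟨Or.inl hp.1, hp.2⟩

theorem nonempty_lift_inter_Vcol {φ : Set ℕ → PFin (ℕ × ℕ)} {Φ : Set ℕ → Set (ℕ × ℕ)}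
    (hφ : IsEmbeddingPN φ) (hΦ : IsLiftingPN φ Φ) {m : ℕ} (hV : Φ {m} = Vcol m)
    {D : Set (ℕ × ℕ)} {H : ℕ × ℕ → ℕ} {a : Set ℕ} (hm : m ∈ a)
    (hD : (H '' (D ∩ Vcol m) \ a).Infinite) :
    ({p ∈ D ∩ Φ a | H p ∉ a} ∩ Vcol m).Nonempty := by
  have hΦcol : (Vcol m \ Φ a).Finite := hV ▸ hΦ.diff_finite_of_subset hφ (singleton_subset_iff.2 hm)
  have hDcol : {p ∈ D ∩ Vcol m | H p ∉ a}.Infinite :=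
    Infinite.of_image H <| hD.mono <| by
      rintro _ ⟨⟨p, hp, rfl⟩, hpa⟩
      exact ⟨p, ⟨hp, hpa⟩, rfl⟩
  obtain ⟨p, ⟨⟨hpD, hpm⟩, hpa⟩, hpcol⟩ := (hDcol.sdiff hΦcol).nonempty
  have hpΦ : p ∈ Φ a := by
    by_contra h
    exact hpcol ⟨hpm, h⟩
  exact ⟨p, ⟨⟨hpD, hpΦ⟩, hpa⟩, hpm⟩

theorem finite_apply_notMem_of_almostEq {α β : Type} {X D Df L : Set α} {H h : α → β}
    {a : Set β} (hX : AlmostEq (X ∩ L) {p ∈ Df | h p ∈ a}) (hD : AlmostEq (D ∩ L) Df)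
    (hH : {p ∈ D ∩ Df | H p ≠ h p}.Finite) :
    {p ∈ D ∩ X ∩ L | H p ∉ a}.Finite := by
  refine (hX.union (hD.union hH)).subset ?_
  rintro p ⟨⟨⟨hpD, hpX⟩, hpL⟩, hpa⟩
  simp only [mem_union, mem_symmDiff, mem_inter_iff, mem_ofPred_eq]
  by_cases hp : H p = h p
  · rw [hp] at hpa
    tauto
  · tauto

theorem infinite_of_forall_inter_Vcol_nonempty {P : Set (ℕ × ℕ)} {a : Set ℕ} (ha : a.Infinite)
    (h : ∀ m ∈ a, (P ∩ Vcol m).Nonempty) : P.Infinite :=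
  Infinite.of_image Prod.fst <| ha.mono fun m hm => (h m hm).imp fun _ hp => hp

theorem exists_Lset_inter_Vcol_nonempty {P : Set (ℕ × ℕ)} {a : Set ℕ}
    (h : ∀ m ∈ a, (P ∩ Vcol m).Nonempty) :
    ∃ f : ℕ → ℕ, ∀ m ∈ a, (P ∩ Lset f ∩ Vcol m).Nonempty := by
  choose! q hqP hqm using h
  refine ⟨fun m => (q m).2, fun m hm => ⟨q m, ⟨hqP m hm, ?_⟩, hqm m hm⟩⟩
  change (q m).2 ≤ (q (q m).1).2
  rw [show (q m).1 = m from hqm m hm]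

theorem finitely_many_bad_columns_general
    (φ : Set ℕ → PFin (ℕ × ℕ)) (hφ : IsEmbeddingPN φ)
    (Φ : Set ℕ → Set (ℕ × ℕ)) (hΦ : IsLiftingPN φ Φ)
    (hV : ∀ n : ℕ, Φ {n} = Vcol n)
    (A : Set ℕ)
    (D : Set (ℕ × ℕ)) (H : ℕ × ℕ → ℕ)
    (hcond : ∀ f : ℕ → ℕ, ∃ (Df : Set (ℕ × ℕ)) (hf : ℕ × ℕ → ℕ),
      Df ⊆ Lset f ∧ (∀ p ∈ Df, hf p ∈ A) ∧ (∀ n : ℕ, {p ∈ Df | hf p = n}.Finite) ∧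
      (∀ a ⊆ A, AlmostEq (Φ a ∩ Lset f) {p ∈ Df | hf p ∈ a}) ∧
      AlmostEq (D ∩ Lset f) Df ∧
      {p ∈ D ∩ Df | H p ≠ hf p}.Finite) :
    {m ∈ A | {n ∈ A | ({p ∈ D | H p = n} ∩ Vcol m).Nonempty}.Infinite}.Finite := by
  by_contra hbad
  obtain ⟨a, haS, ha, hNa⟩ := exists_infinite_subset_forall_infinite_diff hbad fun m hm => hm.2
  have haA : a ⊆ A := fun m hm => (haS hm).1
  have hcol : ∀ m ∈ a, ({p ∈ D ∩ Φ a | H p ∉ a} ∩ Vcol m).Nonempty := fun m hm =>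
    nonempty_lift_inter_Vcol hφ hΦ (hV m) hm <| (hNa m hm).mono <| sdiff_subset_sdiff_left <| by
      rintro _ ⟨-, p, ⟨hpD, rfl⟩, hpm⟩
      exact ⟨p, ⟨hpD, hpm⟩, rfl⟩
  obtain ⟨f, hf⟩ := exists_Lset_inter_Vcol_nonempty hcol
  obtain ⟨Df, _, -, -, -, hΦf, hDf, hHf⟩ := hcond f
  exact infinite_of_forall_inter_Vcol_nonempty ha hf <|
    (finite_apply_notMem_of_almostEq (hΦf a haA) hDf hHf).subset
      fun _ ⟨⟨hpDΦ, hpa⟩, hpL⟩ => ⟨⟨hpDΦ, hpL⟩, hpa⟩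

/-- only finitely many `m ∈ A` have `H⁻¹(n) ∩ V_m ≠ ∅` for infinitely many
`n ∈ A`. -/
theorem finitely_many_bad_columns
    (φ : Set ℕ → PFin (ℕ × ℕ)) (hφ : IsEmbeddingPN φ)
    (Φ : Set ℕ → Set (ℕ × ℕ)) (hΦ : IsLiftingPN φ Φ)
    (hV : ∀ n : ℕ, Φ {n} = Vcol n)
    (A : Set ℕ) (hA : A.Infinite)
    (D : Set (ℕ × ℕ)) (H : ℕ × ℕ → ℕ) (hH : ∀ p ∈ D, H p ∈ A)
    (hcond : ∀ f : ℕ → ℕ, ∃ (Df : Set (ℕ × ℕ)) (hf : ℕ × ℕ → ℕ),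
      Df ⊆ Lset f ∧ (∀ p ∈ Df, hf p ∈ A) ∧ (∀ n : ℕ, {p ∈ Df | hf p = n}.Finite) ∧
      (∀ a ⊆ A, AlmostEq (Φ a ∩ Lset f) {p ∈ Df | hf p ∈ a}) ∧
      AlmostEq (D ∩ Lset f) Df ∧
      {p ∈ D ∩ Df | H p ≠ hf p}.Finite) :
    {m ∈ A | {n ∈ A | ({p ∈ D | H p = n} ∩ Vcol m).Nonempty}.Infinite}.Finite :=
  finitely_many_bad_columns_general φ hφ Φ hΦ hV A D H hcond

end Paper
end

section
/- Let Φ : P(ℕ) → P(ℕ×ℕ) be a lifting of a Boolean-algebra embedding φ : P(ℕ) → P(ℕ×ℕ)/fin with Φ({n}) = V_n for every n, let A ⊆ ℕ be infinite, and let D ⊆ ℕ×ℕ and H : D → A be such that for every f ∈ ω^ω there are a set D_f ⊆ L_f and a finite-to-one function h_f : D_f → A with: Φ(a) ∩ L_f =* h_f⁻¹[a] for every a ⊆ A; D ∩ L_f =* D_f; and H(p) = h_f(p) for all but finitely many p ∈ D ∩ D_f. Then for every n ∈ A the set {m ∈ A : H⁻¹(n) ∩ V_m ≠ ∅} is finite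 (here H⁻¹(n) denotes H⁻¹({n}) ⊆ D). -/
open Set MeasureTheory
open scoped ENNReal

namespace Paper

/-! Choose in every column met by the fibre `H⁻¹(n)` one of its points and let `f` record the
heights of these points. Then `H⁻¹(n) ∩ L_f` still meets all those columns, but it is almost
equal to the fibre `h_f⁻¹(n)`, which is finite. -/

theorem finite_fibre_inter_of_almostEq {α β : Type} {D L Df : Set α} {H h : α → β} {b : β}
    (hDf : AlmostEq (D ∩ L) Df) (hH : {p ∈ D ∩ Df | H p ≠ h p}.Finite)
    (hfib : {p ∈ Df | h p = b}.Finite) :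
    ({p ∈ D | H p = b} ∩ L).Finite := by
  refine ((hDf.union hH).union hfib).subset ?_
  rintro p ⟨⟨hpD, rfl⟩, hpL⟩
  by_cases hp : p ∈ Df
  · by_cases heq : h p = H p
    · exact Or.inr ⟨hp, heq⟩
    · exact Or.inl (Or.inr ⟨⟨hpD, hp⟩, Ne.symm heq⟩)
  · exact Or.inl (Or.inl (Or.inl ⟨⟨hpD, hpL⟩, hp⟩))

theorem finite_columns_of_forall_finite_inter_lset {X : Set (ℕ × ℕ)}
    (hX : ∀ f, (X ∩ Lset f).Finite) : {m | (X ∩ Vcol m).Nonempty}.Finite := by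
  have height : ∀ m, ∃ k, (X ∩ Vcol m).Nonempty → (m, k) ∈ X := by
    intro m
    by_cases hm : (X ∩ Vcol m).Nonempty
    · obtain ⟨p, hpX, rfl⟩ := hm
      exact ⟨p.2, fun _ => hpX⟩
    · exact ⟨0, fun h => absurd h hm⟩
  choose f hf using height
  refine ((hX f).image Prod.fst).subset fun m hm => ?_
  exact ⟨(m, f m), ⟨hf m hm, le_refl (f m)⟩, rfl⟩

theorem fibre_meets_finitely_many_columns_general
    (Φ : Set ℕ → Set (ℕ × ℕ))
    (A : Set ℕ)
    (D : Set (ℕ × ℕ)) (H : ℕ × ℕ → ℕ)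
    (hcond : ∀ f : ℕ → ℕ, ∃ (Df : Set (ℕ × ℕ)) (hf : ℕ × ℕ → ℕ),
      Df ⊆ Lset f ∧ (∀ p ∈ Df, hf p ∈ A) ∧ (∀ n : ℕ, {p ∈ Df | hf p = n}.Finite) ∧
      (∀ a ⊆ A, AlmostEq (Φ a ∩ Lset f) {p ∈ Df | hf p ∈ a}) ∧
      AlmostEq (D ∩ Lset f) Df ∧
      {p ∈ D ∩ Df | H p ≠ hf p}.Finite) :
    ∀ n ∈ A, {m ∈ A | ({p ∈ D | H p = n} ∩ Vcol m).Nonempty}.Finite := by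
  intro n _
  have fibre_inter_lset_finite : ∀ f, ({p ∈ D | H p = n} ∩ Lset f).Finite := by
    intro f
    obtain ⟨Df, hf, -, -, hfib, -, hDf, hH⟩ := hcond f
    exact finite_fibre_inter_of_almostEq hDf hH (hfib n)
  exact (finite_columns_of_forall_finite_inter_lset fibre_inter_lset_finite).subset
    fun m hm => hm.2

/-- for every `n ∈ A`, the fibre `H⁻¹(n)` meets only finitely many columns
`V_m` with `m ∈ A`. -/
theorem fibre_meets_finitely_many_columns
    (φ : Set ℕ → PFin (ℕ × ℕ)) (hφ : IsEmbeddingPN φ)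
    (Φ : Set ℕ → Set (ℕ × ℕ)) (hΦ : IsLiftingPN φ Φ)
    (hV : ∀ n : ℕ, Φ {n} = Vcol n)
    (A : Set ℕ) (hA : A.Infinite)
    (D : Set (ℕ × ℕ)) (H : ℕ × ℕ → ℕ) (hH : ∀ p ∈ D, H p ∈ A)
    (hcond : ∀ f : ℕ → ℕ, ∃ (Df : Set (ℕ × ℕ)) (hf : ℕ × ℕ → ℕ),
      Df ⊆ Lset f ∧ (∀ p ∈ Df, hf p ∈ A) ∧ (∀ n : ℕ, {p ∈ Df | hf p = n}.Finite) ∧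
      (∀ a ⊆ A, AlmostEq (Φ a ∩ Lset f) {p ∈ Df | hf p ∈ a}) ∧
      AlmostEq (D ∩ Lset f) Df ∧
      {p ∈ D ∩ Df | H p ≠ hf p}.Finite) :
    ∀ n ∈ A, {m ∈ A | ({p ∈ D | H p = n} ∩ Vcol m).Nonempty}.Finite :=
  fibre_meets_finitely_many_columns_general Φ A D H hcond

end Paper
end
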